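/- arXiv:1001.3251 — 4 statements merged into one kernel-verified Lean document; each statement's English description precedes it below -/
import Mathlib

section
/- Let R be a trapezoid representation of a trapezoid graph G, let u be a vertex of G, and let V_i be a master component of u such that every trapezoid of a vertex of V_i lies completely to the left of T_u in R. Then for every component V_j ∈ D*_u(V_i), every trapezoid of a vertex of V_j lies completely to the right of T_u in R. -/
/-!
In a trapezoid representation, `≪` is a strict order and `G` is exactly its incomparability
graph. Hence every vertex of `G \ N[u]` is comparable with `u`, and being left of `u` propagates
along the edges of `G \ N[u]`, so each component lies entirely on one side of `T_u`.

Suppose `V_j ∈ D*_u(V_i)` also lies left of `u`. There is `w ∈ N(V_j) \ N(V_i)`, and by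
maximality of `|D_u(V_i)|` also `w' ∈ N(V_i) \ N(V_j)` (otherwise `D_u(V_i) ⊊ D_u(V_j)`).
Both are neighbours of `u`, which forces `V_i ≪ w` and `V_j ≪ w'`. A vertex of `V_i` adjacent
to `w'` and a vertex of `V_j` adjacent to `w` lie in different components, so they are
comparable, and either order contradicts one of these two adjacencies by transitivity.
-/

open SimpleGraph Set

namespace SimpleGraph

variable {V : Type*}

/-- The vertex set of `G \ N[u]`. -/
def nonNeighborSet (G : SimpleGraph V) (u : V) : Set V := {v | v ∉ G.neighborSet u ∧ v ≠ u}

/-- The neighbourhood `N(A)` of a vertex set `A`. -/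
def extNeighborSet (G : SimpleGraph V) (A : Set V) : Set V := {w | w ∉ A ∧ ∃ v ∈ A, G.Adj v w}

lemma adj_of_mem_extNeighborSet_supp {G : SimpleGraph V} {u w : V}
    {C : (G.induce (G.nonNeighborSet u)).ConnectedComponent}
    (hw : w ∈ G.extNeighborSet ((↑) '' C.supp)) : G.Adj u w := by
  obtain ⟨hwC, _, ⟨x, hxC, rfl⟩, hxw⟩ := hw
  have hwu : w ≠ u := by
    rintro rfl
    exact x.2.1 hxw.symm
  by_contra huw
  exact hwC ⟨⟨w, huw, hwu⟩, C.mem_supp_of_adj_mem_supp hxC hxw, rfl⟩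

lemma ConnectedComponent.ne_and_not_adj_of_ne {G : SimpleGraph V} {C C' : G.ConnectedComponent}
    (hCC' : C ≠ C') {x y : V} (hx : x ∈ C.supp) (hy : y ∈ C'.supp) : x ≠ y ∧ ¬G.Adj x y := by
  refine ⟨?_, fun hxy ↦ hCC' (C.eq_of_common_vertex (C.mem_supp_of_adj_mem_supp hx hxy) hy)⟩
  rintro rfl
  exact hCC' (C.eq_of_common_vertex hx hy)

section Incomparability

variable {r : V → V → Prop}

lemma compl_fromRel_adj {v w : V} : (fromRel r)ᶜ.Adj v w ↔ v ≠ w ∧ ¬r v w ∧ ¬r w v := by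
  simp only [compl_adj, fromRel_adj]
  tauto

lemma rel_or_rel_of_not_compl_fromRel_adj {v w : V} (hne : v ≠ w) (h : ¬(fromRel r)ᶜ.Adj v w) :
    r v w ∨ r w v := by
  by_contra! h'
  exact h (compl_fromRel_adj.2 ⟨hne, h'⟩)

lemma rel_of_compl_fromRel_adj_of_rel [IsTrans V r] {x y u : V} (hxu : r x u)
    (hxy : (fromRel r)ᶜ.Adj x y) (hyu : ¬(fromRel r)ᶜ.Adj y u) (hne : y ≠ u) : r y u :=
  (rel_or_rel_of_not_compl_fromRel_adj hne hyu).resolve_right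
    fun huy ↦ (compl_fromRel_adj.1 hxy).2.1 (_root_.trans hxu huy)

lemma rel_of_rel_of_compl_fromRel_adj [IsTrans V r] {z u w : V} (hzu : r z u)
    (huw : (fromRel r)ᶜ.Adj u w) (hzw : ¬(fromRel r)ᶜ.Adj z w) (hne : z ≠ w) : r z w :=
  (rel_or_rel_of_not_compl_fromRel_adj hne hzw).resolve_right
    fun hwz ↦ (compl_fromRel_adj.1 huw).2.2 (_root_.trans hwz hzu)

variable [IsTrans V r] {u : V}
  {C C' : ((fromRel r)ᶜ.induce ((fromRel r)ᶜ.nonNeighborSet u)).ConnectedComponent}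

lemma rel_of_mem_supp_of_rel {x y : (fromRel r)ᶜ.nonNeighborSet u} (hx : x ∈ C.supp)
    (hy : y ∈ C.supp) (hxu : r x u) : r y u := by
  have hxy := (reachable_iff_reflTransGen x y).1 (C.reachable_of_mem_supp hx hy)
  clear hx hy
  induction hxy with
  | refl => exact hxu
  | @tail z w _ hzw ih =>
    exact rel_of_compl_fromRel_adj_of_rel ih hzw (fun h ↦ w.2.1 h.symm) w.2.2

lemma rel_of_notMem_extNeighborSet_supp {w : V} (hC : ∀ x ∈ C.supp, r x u)
    (huw : (fromRel r)ᶜ.Adj u w) (hw : w ∉ (fromRel r)ᶜ.extNeighborSet ((↑) '' C.supp))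
    {x : (fromRel r)ᶜ.nonNeighborSet u} (hx : x ∈ C.supp) : r x w := by
  have hwS : w ∉ (fromRel r)ᶜ.nonNeighborSet u := fun h ↦ h.1 huw
  have hwC : w ∉ ((↑) '' C.supp : Set V) := fun ⟨y, _, hy⟩ ↦ hwS (hy ▸ y.2)
  exact rel_of_rel_of_compl_fromRel_adj (hC x hx) huw
    (fun hxw ↦ hw ⟨hwC, x, ⟨x, hx, rfl⟩, hxw⟩) fun h ↦ hwS (h ▸ x.2)

theorem extNeighborSet_supp_subset_or_subset (hC : ∀ x ∈ C.supp, r x u)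
    (hC' : ∀ x ∈ C'.supp, r x u) :
    (fromRel r)ᶜ.extNeighborSet ((↑) '' C.supp) ⊆
        (fromRel r)ᶜ.extNeighborSet ((↑) '' C'.supp) ∨
      (fromRel r)ᶜ.extNeighborSet ((↑) '' C'.supp) ⊆
        (fromRel r)ᶜ.extNeighborSet ((↑) '' C.supp) := by
  by_contra! ⟨h, h'⟩
  obtain ⟨w, hwC, hwC'⟩ := not_subset.1 h
  obtain ⟨w', hw'C', hw'C⟩ := not_subset.1 h'
  obtain ⟨_, ⟨x, hx, rfl⟩, hxw⟩ := hwC.2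
  obtain ⟨_, ⟨x', hx', rfl⟩, hx'w'⟩ := hw'C'.2
  have hx'_w : r x' w :=
    rel_of_notMem_extNeighborSet_supp hC' (adj_of_mem_extNeighborSet_supp hwC) hwC' hx'
  have hx_w' : r x w' :=
    rel_of_notMem_extNeighborSet_supp hC (adj_of_mem_extNeighborSet_supp hw'C') hw'C hx
  have hCC' : C ≠ C' := by
    rintro rfl
    exact hwC' hwC
  obtain ⟨hne, hnadj⟩ := ConnectedComponent.ne_and_not_adj_of_ne hCC' hx hx'
  rcases rel_or_rel_of_not_compl_fromRel_adj (Subtype.val_injective.ne hne) hnadj with hxx' | hx'x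
  · exact (compl_fromRel_adj.1 hxw).2.1 (_root_.trans hxx' hx'_w)
  · exact (compl_fromRel_adj.1 hx'w').2.1 (_root_.trans hx'x hx_w')

end Incomparability

end SimpleGraph

lemma le_of_le_of_ncard_preimage_Iic_le {ι α : Type*} [Finite ι] [Preorder α] {f : ι → α}
    {i j : ι} (hmax : (f ⁻¹' Iic (f j)).ncard ≤ (f ⁻¹' Iic (f i)).ncard) (hij : f i ≤ f j) :
    f j ≤ f i := by
  by_contra hji
  have hssub : f ⁻¹' Iic (f i) ⊂ f ⁻¹' Iic (f j) :=
    ⟨fun _ hk ↦ le_trans hk hij, fun h ↦ hji (h (le_refl (f j)))⟩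
  exact (ncard_lt_ncard hssub).not_ge hmax

lemma isTrans_of_trapezoid {V : Type*} {a b c d : V → ℝ} (hab : ∀ v, a v ≤ b v)
    (hcd : ∀ v, c v ≤ d v) {Lt : V → V → Prop} (hLt : ∀ v w, Lt v w ↔ (b v < a w ∧ d v < c w)) :
    IsTrans V Lt where
  trans x y z hxy hyz := by
    rw [hLt] at *
    exact ⟨by linarith [hab y], by linarith [hcd y]⟩

theorem master_component_left_right_general {V : Type*} [Fintype V]
    (G : SimpleGraph V)
    (a b c d : V → ℝ) (hab : ∀ v, a v ≤ b v) (hcd : ∀ v, c v ≤ d v)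
    (Lt : V → V → Prop) (hLt : ∀ v w, Lt v w ↔ (b v < a w ∧ d v < c w))
    (hAdj : ∀ v w, G.Adj v w ↔ (v ≠ w ∧ ¬ Lt v w ∧ ¬ Lt w v))
    (u : V)
    (S : Set V) (hS : S = {v | v ∉ G.neighborSet u ∧ v ≠ u})
    (supp : (SimpleGraph.induce S G).ConnectedComponent → Set V)
    (hsupp : ∀ C, supp C =
      {v | ∃ h : v ∈ S, (SimpleGraph.induce S G).connectedComponentMk ⟨v, h⟩ = C})
    (Nbr : Set V → Set V)
    (hNbr : ∀ A, Nbr A = {w | w ∉ A ∧ ∃ v ∈ A, G.Adj v w})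
    (Dom : (SimpleGraph.induce S G).ConnectedComponent →
      Set ((SimpleGraph.induce S G).ConnectedComponent))
    (hDom : ∀ C, Dom C = {C' | Nbr (supp C') ⊆ Nbr (supp C)})
    (Ci : (SimpleGraph.induce S G).ConnectedComponent)
    (hmaster : ∀ C', (Dom C').ncard ≤ (Dom Ci).ncard)
    (hleft : ∀ v ∈ supp Ci, Lt v u) :
    ∀ Cj ∈ ((Set.univ : Set ((SimpleGraph.induce S G).ConnectedComponent)) \ Dom Ci),
      ∀ v ∈ supp Cj, Lt u v := by
  obtain rfl : G = (fromRel Lt)ᶜ := by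
    ext v w
    rw [hAdj, compl_fromRel_adj]
  have := isTrans_of_trapezoid hab hcd hLt
  obtain rfl : S = (fromRel Lt)ᶜ.nonNeighborSet u := hS
  have hsupp' (C) : supp C = (↑) '' C.supp := by
    rw [hsupp, Subtype.coe_image]
    rfl
  have hNbr' (C) : Nbr (supp C) = (fromRel Lt)ᶜ.extNeighborSet ((↑) '' C.supp) := by
    rw [hNbr, hsupp']
    rfl
  rintro Cj ⟨-, hCj⟩ v hv
  have hmax := hmaster Cj
  rw [hDom, hDom] at hmax
  rw [hDom] at hCj
  rw [hsupp'] at hv hleft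
  obtain ⟨v, hvCj, rfl⟩ := hv
  by_contra huv
  have hvu : Lt v u :=
    (rel_or_rel_of_not_compl_fromRel_adj v.2.2 fun h ↦ v.2.1 h.symm).resolve_right huv
  rcases extNeighborSet_supp_subset_or_subset (fun x hx ↦ hleft x ⟨x, hx, rfl⟩)
      (fun x hx ↦ rel_of_mem_supp_of_rel hvCj hx hvu) with hij | hji
  · rw [← hNbr', ← hNbr'] at hij
    exact hCj (le_of_le_of_ncard_preimage_Iic_le (f := fun C ↦ Nbr (supp C)) hmax hij)
  · rw [← hNbr', ← hNbr'] at hji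
    exact hCj hji

/-- In a trapezoid representation `R` of `G`, if `V_i` is a master component of `u`
whose trapezoids all lie completely to the left of `T_u`, then all trapezoids of
every component `V_j ∈ D*_u(V_i)` lie completely to the right of `T_u`. -/
theorem master_component_left_right {V : Type*} [Fintype V] [DecidableEq V]
    (G : SimpleGraph V)
    (a b c d : V → ℝ) (hab : ∀ v, a v ≤ b v) (hcd : ∀ v, c v ≤ d v)
    (Lt : V → V → Prop) (hLt : ∀ v w, Lt v w ↔ (b v < a w ∧ d v < c w))
    (hAdj : ∀ v w, G.Adj v w ↔ (v ≠ w ∧ ¬ Lt v w ∧ ¬ Lt w v))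
    (u : V)
    (S : Set V) (hS : S = {v | v ∉ G.neighborSet u ∧ v ≠ u})
    (supp : (SimpleGraph.induce S G).ConnectedComponent → Set V)
    (hsupp : ∀ C, supp C =
      {v | ∃ h : v ∈ S, (SimpleGraph.induce S G).connectedComponentMk ⟨v, h⟩ = C})
    (Nbr : Set V → Set V)
    (hNbr : ∀ A, Nbr A = {w | w ∉ A ∧ ∃ v ∈ A, G.Adj v w})
    (Dom : (SimpleGraph.induce S G).ConnectedComponent →
      Set ((SimpleGraph.induce S G).ConnectedComponent))
    (hDom : ∀ C, Dom C = {C' | Nbr (supp C') ⊆ Nbr (supp C)})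
    (Ci : (SimpleGraph.induce S G).ConnectedComponent)
    (hmaster : ∀ C', (Dom C').ncard ≤ (Dom Ci).ncard)
    (hleft : ∀ v ∈ supp Ci, Lt v u) :
    ∀ Cj ∈ ((Set.univ : Set ((SimpleGraph.induce S G).ConnectedComponent)) \ Dom Ci),
      ∀ v ∈ supp Cj, Lt u v :=
  master_component_left_right_general G a b c d hab hcd Lt hLt hAdj u S hS supp hsupp Nbr hNbr Dom
    hDom Ci hmaster hleft
end

section
/- Every parallelogram graph is an acyclic trapezoid graph: if G has a parallelogram representation R (a trapezoid representation in which every trapezoid is a parallelogram), then R is an acyclic trapezoid representation of G. -/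
/-!
Both lines of a parallelogram have the same angle with `L_2`, and the offset `p.1 - p.2` of
a line `p` (its endpoints on `L_1` and `L_2`) is a strictly monotone proxy for that angle.
So `v ↦ a v - c v` is well defined on `F_R` and strictly decreases along every arc, which
rules out directed cycles.
-/

theorem Relation.not_transGen_self_of_lt {α β : Type*} [Preorder β] {r : α → α → Prop}
    (f : α → β) (hf : ∀ x y, r x y → f y < f x) (x : α) : ¬ Relation.TransGen r x x := by
  intro h
  have hlt := Relation.TransGen.lift (p := (· > ·)) f hf x x h
  rw [Relation.transGen_eq_self] at hlt
  exact lt_irrefl _ hlt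

theorem fst_sub_snd_eq_of_mem_pair {a b c d : ℝ} (h : a - c = b - d) {p : ℝ × ℝ}
    (hp : p ∈ ({(a, c), (b, d)} : Set (ℝ × ℝ))) : p.1 - p.2 = a - c := by
  rcases hp with rfl | rfl
  exacts [rfl, h.symm]

theorem parallelogram_is_acyclic_trapezoid_general {V : Type*}
    (a b c d : V → ℝ)
    (hpar : ∀ v, a v - c v = b v - d v)
    (cross : ℝ × ℝ → ℝ × ℝ → Prop)
    (Arc : V → V → Prop)
    (hArc : ∀ v w, Arc v w ↔ (v ≠ w ∧
      ∃ p ∈ ({(a v, c v), (b v, d v)} : Set (ℝ × ℝ)),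
      ∃ q ∈ ({(a w, c w), (b w, d w)} : Set (ℝ × ℝ)),
        cross p q ∧ q.1 - q.2 < p.1 - p.2)) :
    ∀ v, ¬ Relation.TransGen Arc v v := by
  refine Relation.not_transGen_self_of_lt (fun v => a v - c v) fun v w hvw => ?_
  obtain ⟨-, p, hp, q, hq, -, hlt⟩ := (hArc v w).1 hvw
  rwa [fst_sub_snd_eq_of_mem_pair (hpar v) hp, fst_sub_snd_eq_of_mem_pair (hpar w) hq] at hlt

/-- Every parallelogram representation is an acyclic trapezoid representation:
the directed graph `F_R`, obtained by orienting crossings of left/right lines of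
the trapezoids from the line with smaller angle with `L_2` to the one with larger
angle and merging the two lines of each trapezoid, has no directed cycle. -/
theorem parallelogram_is_acyclic_trapezoid {V : Type*} [Fintype V]
    (G : SimpleGraph V)
    (a b c d : V → ℝ) (hab : ∀ v, a v ≤ b v) (hcd : ∀ v, c v ≤ d v)
    (hAdj : ∀ v w, G.Adj v w ↔
      (v ≠ w ∧ ¬ (b v < a w ∧ d v < c w) ∧ ¬ (b w < a v ∧ d w < c v)))
    (hpar : ∀ v, a v - c v = b v - d v)
    (cross : ℝ × ℝ → ℝ × ℝ → Prop)
    (hcross : ∀ p q, cross p q ↔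
      ((p.1 < q.1 ∧ q.2 < p.2) ∨ (q.1 < p.1 ∧ p.2 < q.2)))
    (Arc : V → V → Prop)
    (hArc : ∀ v w, Arc v w ↔ (v ≠ w ∧
      ∃ p ∈ ({(a v, c v), (b v, d v)} : Set (ℝ × ℝ)),
      ∃ q ∈ ({(a w, c w), (b w, d w)} : Set (ℝ × ℝ)),
        cross p q ∧ q.1 - q.2 < p.1 - p.2)) :
    ∀ v, ¬ Relation.TransGen Arc v v :=
  parallelogram_is_acyclic_trapezoid_general a b c d hpar cross Arc hArc
end

section
/- Every permutation graph is a bounded tolerance graph: if G is the intersection graph of segments between two parallel lines, then G admits a tolerance representation ⟨I,t⟩ with t_i = |I_i| for every vertex. -/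
open SimpleGraph Set MeasureTheory

/-!
With `t = |I|` and intervals of positive length, the tolerance condition
`min |I| |J| ≤ |I ∩ J|` says exactly that one interval contains the other. So it suffices to
send the segment from `x` on the upper line to `y` on the lower line to an interval `[α, β + C]`
whose left end is ordered like `x` and whose right end is ordered like `y`: nesting is then
crossing. Ties among the endpoints are broken lexicographically, by the other endpoint and
then by an injective labelling, so that coinciding endpoints never produce a nesting.
-/

theorem exists_real_lt_iff_lt {V β : Type*} [Finite V] [LinearOrder β] (k : V → β) :
    ∃ f : V → ℝ, ∀ u v, f u < f v ↔ k u < k v := by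
  classical
  have := Fintype.ofFinite V
  let below (v : V) : Finset V := {w | k w < k v}
  refine ⟨fun v => (below v).card, fun u v => ?_⟩
  rw [Nat.cast_lt]
  constructor
  · intro h
    by_contra! hvu
    refine (Finset.card_le_card ?_).not_gt h
    intro w hw
    simp only [below, Finset.mem_filter, Finset.mem_univ, true_and] at hw ⊢
    exact hw.trans_le hvu
  · intro h
    apply Finset.card_lt_card
    refine Finset.ssubset_iff_of_subset (fun w hw => ?_) |>.2 ⟨u, ?_, ?_⟩
    · simp only [below, Finset.mem_filter, Finset.mem_univ, true_and] at hw ⊢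
      exact hw.trans h
    · simpa [below] using h
    · simp [below]

theorem injective_of_lt_iff_lt {V α β : Type*} [LinearOrder α] [LinearOrder β]
    {f : V → α} {k : V → β} (h : ∀ u v, f u < f v ↔ k u < k v) (hk : k.Injective) :
    f.Injective := fun u v huv =>
  hk <| le_antisymm (not_lt.1 fun hlt => ((h v u).2 hlt).ne huv.symm)
    (not_lt.1 fun hlt => ((h u v).2 hlt).ne huv)

theorem lt_and_lt_iff_toLex {α β γ : Type*} [LinearOrder α] [LinearOrder β] [LinearOrder γ]
    {x₁ x₂ : α} {y₁ y₂ : β} {r₁ r₂ : γ} :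
    x₁ < x₂ ∧ y₂ < y₁ ↔
      toLex (x₁, toLex (y₁, r₁)) < toLex (x₂, toLex (y₂, r₂)) ∧
        toLex (y₂, toLex (x₂, r₂)) < toLex (y₁, toLex (x₁, r₁)) := by
  simp only [Prod.Lex.toLex_lt_toLex]
  constructor
  · rintro ⟨hx, hy⟩
    exact ⟨.inl hx, .inl hy⟩
  · rintro ⟨hx | ⟨rfl, hy | ⟨rfl, hr⟩⟩, hy' | ⟨hyy, hx' | ⟨hxx, hr'⟩⟩⟩ <;>
    exact ⟨by order, by order⟩

theorem min_sub_le_volume_Icc_inter_iff {a₁ b₁ a₂ b₂ : ℝ} (h₁ : a₁ < b₁) (h₂ : a₂ < b₂) :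
    min (b₁ - a₁) (b₂ - a₂) ≤ (volume (Icc a₁ b₁ ∩ Icc a₂ b₂)).toReal ↔
      Icc a₁ b₁ ⊆ Icc a₂ b₂ ∨ Icc a₂ b₂ ⊆ Icc a₁ b₁ := by
  rw [Icc_inter_Icc, Real.volume_Icc, ENNReal.toReal_ofReal', Icc_subset_Icc_iff h₁.le,
    Icc_subset_Icc_iff h₂.le]
  grind

/-- Every permutation graph is a bounded tolerance graph: if `G` is the
intersection graph of line segments between two parallel lines (segment of `v`
having top endpoint `(p v).1` and bottom endpoint `(p v).2`), then `G` admits a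
tolerance representation `⟨I, t⟩` with `t v = |I v|` for every vertex. -/
theorem permutation_is_bounded_tolerance {V : Type*} [Fintype V]
    (G : SimpleGraph V) (p : V → ℝ × ℝ)
    (hAdj : ∀ u v, G.Adj u v ↔ (u ≠ v ∧
      (((p u).1 < (p v).1 ∧ (p v).2 < (p u).2) ∨
       ((p v).1 < (p u).1 ∧ (p u).2 < (p v).2)))) :
    ∃ (a b t : V → ℝ),
      (∀ v, a v ≤ b v) ∧ (∀ v, 0 < t v) ∧ (∀ v, t v = b v - a v) ∧
      ∀ u v, u ≠ v → (G.Adj u v ↔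
        min (t u) (t v) ≤
          (volume (Set.Icc (a u) (b u) ∩ Set.Icc (a v) (b v))).toReal) := by
  obtain ⟨r, hr⟩ := exists_injective_nat V
  obtain ⟨α, hα⟩ := exists_real_lt_iff_lt fun v => toLex ((p v).1, toLex ((p v).2, r v))
  obtain ⟨β, hβ⟩ := exists_real_lt_iff_lt fun v => toLex ((p v).2, toLex ((p v).1, r v))
  have hα_inj : Function.Injective α := injective_of_lt_iff_lt hα fun _ _ h => hr <| by
    simp only [toLex_inj, Prod.mk.injEq] at h
    exact h.2.2
  have hβ_inj : Function.Injective β := injective_of_lt_iff_lt hβ fun _ _ h => hr <| by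
    simp only [toLex_inj, Prod.mk.injEq] at h
    exact h.2.2
  obtain ⟨M, hM⟩ := Finite.bddAbove_range fun v => α v - β v
  have hlt (v : V) : α v < β v + (M + 1) := by linarith [hM ⟨v, rfl⟩]
  refine ⟨α, fun v => β v + (M + 1), fun v => β v + (M + 1) - α v, fun v => (hlt v).le,
    fun v => sub_pos.2 (hlt v), fun v => rfl, fun u v huv => ?_⟩
  have hcross (u v : V) (huv : u ≠ v) : (p u).1 < (p v).1 ∧ (p v).2 < (p u).2 ↔
      Icc (α v) (β v + (M + 1)) ⊆ Icc (α u) (β u + (M + 1)) := by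
    rw [Icc_subset_Icc_iff (hlt v).le, add_le_add_iff_right, (hα_inj.ne huv).le_iff_lt,
      (hβ_inj.ne huv).symm.le_iff_lt, hα, hβ]
    exact lt_and_lt_iff_toLex
  rw [min_sub_le_volume_Icc_inter_iff (hlt u) (hlt v), hAdj, hcross u v huv,
    hcross v u huv.symm, or_comm]
  exact and_iff_right huv
end

section
/- Let G be a trapezoid graph with trapezoid representation R, and u a vertex with D*_u nonempty in the sense that some component of G \ N[u] has trapezoid completely to the right of T_u while another lies completely to the left. Then replacing T_u by its two boundary lines l(T_u) and r(T_u) and deleting the interior does not change adjacency of u to vertices of N_1(u,R) ∪ N_2(u,R) ∪ N_12(u,R): every vertex of N_1(u,R) has its trapezoid intersecting l(T_u), every vertex of N_2(u,R) has its trapezoid intersecting r(T_u), and every vertex of N_12(u,R) intersects both lines — provided R is standard with respect to u. -/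
/-!
`T_w` is connected; if it meets `T_u` it has a point on or to the right of `l(T_u)`, and if
it also meets a trapezoid lying completely to the left of `T_u` it has a point strictly to the
left of `l(T_u)`, so it meets `l(T_u)`. Symmetrically for `r(T_u)`. Since all sides are
segments, it suffices to compare them at the two parallel lines.
-/

open SimpleGraph Set

/-- If `f + g ≥ 0` on a preconnected set, then `{f ≥ 0}` and `{g ≥ 0}` are closed and cover it. -/
theorem IsPreconnected.exists_nonneg_nonneg_of_add_nonneg {X : Type*} [TopologicalSpace X]
    {s : Set X} (hs : IsPreconnected s) {f g : X → ℝ} (hf : Continuous f) (hg : Continuous g)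
    (hfg : ∀ x ∈ s, 0 ≤ f x + g x) (hf₀ : ∃ x ∈ s, 0 ≤ f x) (hg₀ : ∃ x ∈ s, 0 ≤ g x) :
    ∃ x ∈ s, 0 ≤ f x ∧ 0 ≤ g x := by
  have hcover : s ⊆ f ⁻¹' Ici 0 ∪ g ⁻¹' Ici 0 := by
    intro x hx
    simp only [mem_union, mem_preimage, mem_Ici]
    by_contra! h
    linarith [hfg x hx]
  obtain ⟨x, hxs, hfx, hgx⟩ := isPreconnected_closed_iff.1 hs _ _
    (isClosed_Ici.preimage hf) (isClosed_Ici.preimage hg) hcover hf₀ hg₀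
  exact ⟨x, hxs, hfx, hgx⟩

def segmentAt (p q y : ℝ) : ℝ := q + y * (p - q)

@[simp]
theorem segmentAt_zero (p q : ℝ) : segmentAt p q 0 = q := by simp [segmentAt]

@[simp]
theorem segmentAt_one (p q : ℝ) : segmentAt p q 1 = p := by simp [segmentAt]

theorem continuous_segmentAt (p q : ℝ) : Continuous (segmentAt p q) := by
  unfold segmentAt
  fun_prop

theorem segmentAt_le_segmentAt {p q p' q' y : ℝ} (hp : p ≤ p') (hq : q ≤ q')
    (hy₀ : 0 ≤ y) (hy₁ : y ≤ 1) : segmentAt p q y ≤ segmentAt p' q' y := by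
  unfold segmentAt
  nlinarith

theorem exists_mem_Icc_segmentAt_sub_nonneg {p q p' q' : ℝ} (h : p ≤ p' ∨ q ≤ q') :
    ∃ y ∈ Icc (0 : ℝ) 1, 0 ≤ segmentAt p' q' y - segmentAt p q y := by
  rcases h with h | h
  · exact ⟨1, right_mem_Icc.2 zero_le_one, by simpa using h⟩
  · exact ⟨0, left_mem_Icc.2 zero_le_one, by simpa using h⟩

/-- The trapezoid has bottom `[c, d]` and top `[a, b]`. -/
theorem segment_meets_trapezoid_of_endpoints {a b c d p q : ℝ} (hab : a ≤ b) (hcd : c ≤ d)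
    (hleft : a ≤ p ∨ c ≤ q) (hright : p ≤ b ∨ q ≤ d) :
    ∃ y : ℝ, 0 ≤ y ∧ y ≤ 1 ∧
      segmentAt a c y ≤ segmentAt p q y ∧ segmentAt p q y ≤ segmentAt b d y := by
  obtain ⟨y, ⟨hy₀, hy₁⟩, hl, hr⟩ := isPreconnected_Icc.exists_nonneg_nonneg_of_add_nonneg
    ((continuous_segmentAt p q).sub (continuous_segmentAt a c))
    ((continuous_segmentAt b d).sub (continuous_segmentAt p q))
    (fun y hy => by
      simp only [Pi.sub_apply]; linarith [segmentAt_le_segmentAt hab hcd hy.1 hy.2])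
    (exists_mem_Icc_segmentAt_sub_nonneg hleft)
    (exists_mem_Icc_segmentAt_sub_nonneg hright)
  exact ⟨y, hy₀, hy₁, sub_nonneg.1 hl, sub_nonneg.1 hr⟩

theorem standard_representation_line_split_general {V : Type*}
    (G : SimpleGraph V)
    (a b c d : V → ℝ) (hab : ∀ v, a v ≤ b v) (hcd : ∀ v, c v ≤ d v)
    (Lt : V → V → Prop) (hLt : ∀ v w, Lt v w ↔ (b v < a w ∧ d v < c w))
    (hAdj : ∀ v w, G.Adj v w ↔ (v ≠ w ∧ ¬ Lt v w ∧ ¬ Lt w v))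
    (u : V)
    (D1 D2 : Set V) (hD1 : D1 = {v | Lt v u}) (hD2 : D2 = {v | Lt u v})
    (N1 N2 N12 : Set V)
    (hN1 : N1 = {v ∈ G.neighborSet u |
      (∃ w ∈ D1, G.Adj v w) ∧ ¬ (∃ w ∈ D2, G.Adj v w)})
    (hN2 : N2 = {v ∈ G.neighborSet u |
      ¬ (∃ w ∈ D1, G.Adj v w) ∧ (∃ w ∈ D2, G.Adj v w)})
    (hN12 : N12 = {v ∈ G.neighborSet u |
      (∃ w ∈ D1, G.Adj v w) ∧ (∃ w ∈ D2, G.Adj v w)}) :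
    -- every trapezoid of N1 meets the left line l(T_u):
    (∀ w ∈ N1, ∃ y : ℝ, 0 ≤ y ∧ y ≤ 1 ∧
      c w + y * (a w - c w) ≤ c u + y * (a u - c u) ∧
      c u + y * (a u - c u) ≤ d w + y * (b w - d w)) ∧
    -- every trapezoid of N2 meets the right line r(T_u):
    (∀ w ∈ N2, ∃ y : ℝ, 0 ≤ y ∧ y ≤ 1 ∧
      c w + y * (a w - c w) ≤ d u + y * (b u - d u) ∧
      d u + y * (b u - d u) ≤ d w + y * (b w - d w)) ∧
    -- every trapezoid of N12 meets both lines: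
    (∀ w ∈ N12,
      (∃ y : ℝ, 0 ≤ y ∧ y ≤ 1 ∧
        c w + y * (a w - c w) ≤ c u + y * (a u - c u) ∧
        c u + y * (a u - c u) ≤ d w + y * (b w - d w)) ∧
      (∃ y : ℝ, 0 ≤ y ∧ y ≤ 1 ∧
        c w + y * (a w - c w) ≤ d u + y * (b u - d u) ∧
        d u + y * (b u - d u) ≤ d w + y * (b w - d w))) := by
  have overlap_of_adj : ∀ {v w}, G.Adj v w → (a w ≤ b v ∨ c w ≤ d v) := fun {v w} h => by
    have := ((hAdj v w).1 h).2.1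
    rw [hLt, not_and_or, not_lt, not_lt] at this
    exact this
  have meets_left : ∀ w, G.Adj u w → (∃ x ∈ D1, G.Adj w x) → ∃ y : ℝ, 0 ≤ y ∧ y ≤ 1 ∧
      segmentAt (a w) (c w) y ≤ segmentAt (a u) (c u) y ∧
      segmentAt (a u) (c u) y ≤ segmentAt (b w) (d w) y := by
    rintro w huw ⟨x, hx, hwx⟩
    rw [hD1, mem_ofPred_eq, hLt] at hx
    refine segment_meets_trapezoid_of_endpoints (hab w) (hcd w) ?_ (overlap_of_adj huw.symm)
    rcases overlap_of_adj hwx.symm with h | h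
    exacts [Or.inl (h.trans hx.1.le), Or.inr (h.trans hx.2.le)]
  have meets_right : ∀ w, G.Adj u w → (∃ x ∈ D2, G.Adj w x) → ∃ y : ℝ, 0 ≤ y ∧ y ≤ 1 ∧
      segmentAt (a w) (c w) y ≤ segmentAt (b u) (d u) y ∧
      segmentAt (b u) (d u) y ≤ segmentAt (b w) (d w) y := by
    rintro w huw ⟨x, hx, hwx⟩
    rw [hD2, mem_ofPred_eq, hLt] at hx
    refine segment_meets_trapezoid_of_endpoints (hab w) (hcd w) (overlap_of_adj huw) ?_
    rcases overlap_of_adj hwx with h | h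
    exacts [Or.inl (hx.1.le.trans h), Or.inr (hx.2.le.trans h)]
  subst hN1 hN2 hN12
  exact ⟨fun w ⟨huw, hl, _⟩ => meets_left w huw hl, fun w ⟨huw, _, hr⟩ => meets_right w huw hr,
    fun w ⟨huw, hl, hr⟩ => ⟨meets_left w huw hl, meets_right w huw hr⟩⟩

/-- In a trapezoid representation `R` that is standard with respect to `u`, and in
which some non-neighbor lies completely to the left and some completely to the
right of `T_u`, replacing `T_u` by its two boundary lines preserves adjacency of
`u` to `N_1(u,R) ∪ N_2(u,R) ∪ N_12(u,R)`: every trapezoid of `N_1(u,R)` meets the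
left line `l(T_u)`, every trapezoid of `N_2(u,R)` meets the right line `r(T_u)`,
and every trapezoid of `N_12(u,R)` meets both. -/
theorem standard_representation_line_split {V : Type*} [Fintype V]
    (G : SimpleGraph V)
    (a b c d : V → ℝ) (hab : ∀ v, a v ≤ b v) (hcd : ∀ v, c v ≤ d v)
    (Lt : V → V → Prop) (hLt : ∀ v w, Lt v w ↔ (b v < a w ∧ d v < c w))
    (hAdj : ∀ v w, G.Adj v w ↔ (v ≠ w ∧ ¬ Lt v w ∧ ¬ Lt w v))
    (u : V)
    (D1 D2 : Set V) (hD1 : D1 = {v | Lt v u}) (hD2 : D2 = {v | Lt u v})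
    (hDstar : D1.Nonempty ∧ D2.Nonempty)
    (N0 N1 N2 N12 : Set V)
    (hN0 : N0 = {v ∈ G.neighborSet u |
      ¬ (∃ w ∈ D1, G.Adj v w) ∧ ¬ (∃ w ∈ D2, G.Adj v w)})
    (hN1 : N1 = {v ∈ G.neighborSet u |
      (∃ w ∈ D1, G.Adj v w) ∧ ¬ (∃ w ∈ D2, G.Adj v w)})
    (hN2 : N2 = {v ∈ G.neighborSet u |
      ¬ (∃ w ∈ D1, G.Adj v w) ∧ (∃ w ∈ D2, G.Adj v w)})
    (hN12 : N12 = {v ∈ G.neighborSet u |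
      (∃ w ∈ D1, G.Adj v w) ∧ (∃ w ∈ D2, G.Adj v w)})
    -- R is standard with respect to u:
    (hstd1 : ∀ w ∈ N0 ∪ N2, a u < a w ∧ c u < c w)
    (hstd2 : ∀ w ∈ N0 ∪ N1, b w < b u ∧ d w < d u) :
    -- every trapezoid of N1 meets the left line l(T_u):
    (∀ w ∈ N1, ∃ y : ℝ, 0 ≤ y ∧ y ≤ 1 ∧
      c w + y * (a w - c w) ≤ c u + y * (a u - c u) ∧
      c u + y * (a u - c u) ≤ d w + y * (b w - d w)) ∧
    -- every trapezoid of N2 meets the right line r(T_u):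
    (∀ w ∈ N2, ∃ y : ℝ, 0 ≤ y ∧ y ≤ 1 ∧
      c w + y * (a w - c w) ≤ d u + y * (b u - d u) ∧
      d u + y * (b u - d u) ≤ d w + y * (b w - d w)) ∧
    -- every trapezoid of N12 meets both lines:
    (∀ w ∈ N12,
      (∃ y : ℝ, 0 ≤ y ∧ y ≤ 1 ∧
        c w + y * (a w - c w) ≤ c u + y * (a u - c u) ∧
        c u + y * (a u - c u) ≤ d w + y * (b w - d w)) ∧
      (∃ y : ℝ, 0 ≤ y ∧ y ≤ 1 ∧
        c w + y * (a w - c w) ≤ d u + y * (b u - d u) ∧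
        d u + y * (b u - d u) ≤ d w + y * (b w - d w))) :=
  standard_representation_line_split_general G a b c d hab hcd Lt hLt hAdj u D1 D2 hD1 hD2 N1 N2 N12
    hN1 hN2 hN12
end
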